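/- Let n ≥ 2 and let a_1,…,a_n be integers with a_i ≥ 2 for all i. Write p/q = [a_1,…,a_n] and p'/q' = [a_2,…,a_n], each as a fraction in lowest terms with p > q ≥ 1 and p' > q' ≥ 1. Suppose p'/(p'−q') = [b_1,…,b_l] with all b_i ≥ 2. Then p/(p−q) = [2,…,2, b_1 + 1, b_2,…,b_l], where there are exactly a_1 − 2 entries equal to 2 at the beginning. -/

import Mathlib

/-!
Since `p / (p - q) = x / (x - 1)` for `x = p / q`, everything is a computation in `ℚ`:
`x = a₁ - 1 / y` with `y = p' / q' > 1`. Writing values as `1 + 1 / u`, prepending an entry `2`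
replaces `u` by `u + 1`. With `u = 1 - 1 / y` one has `[b₁ + 1, b₂, …] = 1 + 1 / u`, and
`x / (x - 1) = 1 + 1 / (u + a₁ - 2)`.
-/

/-- Hirzebruch–Jung continued fraction `[x₁,…,x_r] = x₁ − 1/(x₂ − 1/(⋯ − 1/x_r))`. -/
def hjCF : List ℤ → ℚ
  | [] => 0
  | a :: l => (a : ℚ) - 1 / hjCF l

def hjDual (x : ℚ) : ℚ := x / (x - 1)

lemma hjDual_div {p q : ℚ} (hq : q ≠ 0) : hjDual (p / q) = p / (p - q) := by
  rw [hjDual, div_sub_one hq, div_div_div_cancel_right₀ hq]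

lemma hjDual_add_one {v : ℚ} (hv : v ≠ 0) : hjDual (v + 1) = 1 + 1 / v := by
  rw [hjDual, add_sub_cancel_right, add_div, div_self hv, add_comm]

lemma List.map_range_succ {α : Type*} (f : ℕ → α) (m : ℕ) :
    (List.range (m + 1)).map f = f 0 :: (List.range m).map fun i => f (i + 1) := by
  rw [List.range_succ_eq_map, List.map_cons, List.map_map]
  rfl

lemma hjCF_cons (x : ℤ) (l : List ℤ) : hjCF (x :: l) = x - 1 / hjCF l := rfl

lemma hjCF_cons_add_one (x : ℤ) (l : List ℤ) : hjCF ((x + 1) :: l) = hjCF (x :: l) + 1 := by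
  simp only [hjCF_cons]
  push_cast
  ring

lemma two_sub_inv_one_add_inv {v : ℚ} (hv : 0 < v) : 2 - 1 / (1 + 1 / v) = 1 + 1 / (v + 1) := by
  field_simp
  ring

lemma hjCF_replicate_two_append (k : ℕ) (rest : List ℤ) {u : ℚ} (hu : 0 < u)
    (h : hjCF rest = 1 + 1 / u) :
    hjCF (List.replicate k 2 ++ rest) = 1 + 1 / (u + k) := by
  induction k with
  | zero => simpa using h
  | succ k ih =>
    rw [List.replicate_succ, List.cons_append, hjCF_cons, ih, Nat.cast_succ, ← add_assoc]
    exact_mod_cast two_sub_inv_one_add_inv (by positivity : 0 < u + k)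

theorem hjDual_sub_inv (k : ℕ) {y : ℚ} (hy : 1 < y) (b : ℤ) (t : List ℤ)
    (h : hjDual y = hjCF (b :: t)) :
    hjDual (k + 2 - 1 / y) = hjCF (List.replicate k 2 ++ (b + 1) :: t) := by
  have hy0 : 0 < y := by linarith
  have hu : 0 < 1 - 1 / y := by
    rw [sub_pos, div_lt_one hy0]
    exact hy
  have hrest : hjCF ((b + 1) :: t) = 1 + 1 / (1 - 1 / y) := by
    rw [hjCF_cons_add_one, ← h, hjDual]
    field_simp
    ring
  rw [hjCF_replicate_two_append k _ hu hrest,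
    show (k + 2 - 1 / y : ℚ) = 1 - 1 / y + k + 1 by ring, hjDual_add_one (by positivity)]

theorem stmt3_general (n : ℕ) (hn : 2 ≤ n) (a : ℕ → ℤ) (ha : ∀ i < n, 2 ≤ a i)
    (p q p' q' : ℕ)
    (hq : 1 ≤ q)
    (hq' : 1 ≤ q') (hq'p' : q' < p')
    (hpqv : (p : ℚ) / q = hjCF ((List.range n).map fun i => a i))
    (hp'v : (p' : ℚ) / q' = hjCF ((List.range (n - 1)).map fun i => a (i + 1)))
    (l : ℕ) (hl : 1 ≤ l)
    (b : ℕ → ℤ)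
    (hbv : (p' : ℚ) / ((p' : ℚ) - q') = hjCF ((List.range l).map fun i => b i)) :
    (p : ℚ) / ((p : ℚ) - q) =
      hjCF (List.replicate ((a 0).toNat - 2) (2 : ℤ) ++ [b 0 + 1] ++
        (List.range (l - 1)).map fun i => b (i + 1)) := by
  obtain ⟨m, rfl⟩ : ∃ m, n = m + 1 := ⟨n - 1, by omega⟩
  obtain ⟨l', rfl⟩ : ∃ l', l = l' + 1 := ⟨l - 1, by omega⟩
  rw [Nat.add_sub_cancel] at hp'v ⊢
  rw [List.map_range_succ, hjCF_cons, ← hp'v] at hpqv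
  rw [List.map_range_succ] at hbv
  have hy : 1 < (p' : ℚ) / q' := by
    rw [one_lt_div (by positivity)]
    exact_mod_cast hq'p'
  have ha0 : (a 0 : ℚ) = ((a 0).toNat - 2 : ℕ) + 2 := by
    have := ha 0 (by omega)
    exact_mod_cast (by omega : a 0 = ((a 0).toNat - 2 : ℕ) + 2)
  rw [← hjDual_div (by positivity), hpqv, ha0, List.append_assoc, List.singleton_append]
  exact hjDual_sub_inv _ hy _ _ (by rw [hjDual_div (by positivity)]; exact hbv)

/-- Indices are 0-based: the chain is `a 0, …, a (n-1)`; the shortened chain is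
`a 1, …, a (n-1)`. -/
theorem stmt3 (n : ℕ) (hn : 2 ≤ n) (a : ℕ → ℤ) (ha : ∀ i < n, 2 ≤ a i)
    (p q p' q' : ℕ)
    (hpq : Nat.Coprime p q) (hq : 1 ≤ q) (hqp : q < p)
    (hp'q' : Nat.Coprime p' q') (hq' : 1 ≤ q') (hq'p' : q' < p')
    (hpqv : (p : ℚ) / q = hjCF ((List.range n).map fun i => a i))
    (hp'v : (p' : ℚ) / q' = hjCF ((List.range (n - 1)).map fun i => a (i + 1)))
    (l : ℕ) (hl : 1 ≤ l)
    (b : ℕ → ℤ) (hb : ∀ i < l, 2 ≤ b i)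
    (hbv : (p' : ℚ) / ((p' : ℚ) - q') = hjCF ((List.range l).map fun i => b i)) :
    (p : ℚ) / ((p : ℚ) - q) =
      hjCF (List.replicate ((a 0).toNat - 2) (2 : ℤ) ++ [b 0 + 1] ++
        (List.range (l - 1)).map fun i => b (i + 1)) :=
  stmt3_general n hn a ha p q p' q' hq hq' hq'p' hpqv hp'v l hl b hbv
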